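/- arXiv:2206.07828 — 2 statements merged into one kernel-verified Lean document; each statement's English description precedes it below -/
import Mathlib

section
/- For any path constraint set C over paths and any term t over a signature Σ, t satisfies C if and only if t satisfies the closure cl(C), where cl(C) is the smallest closed path constraint set containing C. -/
universe u
variable {S : Type u}

/-- Terms over a signature: a symbol applied to a list of child terms. -/
inductive Term (S : Type u) where
  | mk : S → List (Term S) → Term S

/-- The i-th child of a term, if it exists. -/
def Term.child : Term S → ℕ → Option (Term S)
  | .mk _ ts, i => ts[i]?

/-- Subterm of `t` at path `p` (partial). -/
def subAt : List ℕ → Term S → Option (Term S)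
  | [], t => some t
  | i :: p, t => (t.child i).bind (subAt p)

/-- A term satisfies a path equivalence class `c` if the subterms at
all paths of `c` exist and are equal. -/
def pecSat (c : Set (List ℕ)) (t : Term S) : Prop :=
  ∃ t', ∀ p ∈ c, subAt p t = some t'

/-- A term satisfies a path constraint set if it satisfies each member PEC. -/
def pcsSat (C : Set (Set (List ℕ))) (t : Term S) : Prop :=
  ∀ c ∈ C, pecSat c t

/-- A PCS is closed if whenever `p', p'' ∈ c₁ ∈ C` and `p'.p ∈ c₂ ∈ C`,
then also `p''.p ∈ c₂`. -/
def Closed (C : Set (Set (List ℕ))) : Prop :=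
  ∀ c₁ ∈ C, ∀ c₂ ∈ C, ∀ p' p'' p : List ℕ,
    p' ∈ c₁ → p'' ∈ c₁ → p' ++ p ∈ c₂ → p'' ++ p ∈ c₂

/-- A set of paths is prefix-free if no member is a proper prefix of another. -/
def PrefixFree (c : Set (List ℕ)) : Prop :=
  ∀ p ∈ c, ∀ q ∈ c, p <+: q → p = q

/-- Well-formed terms with respect to an arity function. -/
inductive WFT (ar : S → ℕ) : Term S → Prop where
  | mk {s : S} {ts : List (Term S)} :
      ts.length = ar s → (∀ t ∈ ts, WFT ar t) → WFT ar (Term.mk s ts)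

/-- Ordering on PCSs: `C ≤ D` if every PEC of `C` is contained (as a set of
paths) in some PEC of `D`. The closure `cl(C)` is the least closed PCS
containing `C` in this sense. -/
def PCSLe (C D : Set (Set (List ℕ))) : Prop := ∀ c ∈ C, ∃ d ∈ D, c ⊆ d


theorem subAt_append (p q : List ℕ) (t : Term S) :
    subAt (p ++ q) t = (subAt p t).bind (subAt q) := by
  induction p generalizing t with
  | nil => simp [subAt]
  | cons i p ih =>
    simp only [List.cons_append, subAt, Option.bind_assoc]
    cases t.child i <;> simp [ih]

/-- Correctness of Closure: a term satisfies `C` iff it satisfies the closure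
`cl(C)`, the smallest closed PCS containing `C`. -/
theorem closure_correctness {S : Type u} (C cl : Set (Set (List ℕ)))
    (hdisj : C.Pairwise Disjoint)
    (hclosed : Closed cl) (hcontains : PCSLe C cl)
    (hmin : ∀ D : Set (Set (List ℕ)), Closed D → PCSLe C D → PCSLe cl D)
    (t : Term S) :
    pcsSat C t ↔ pcsSat cl t := by
  constructor
  · intro h
    set D : Set (Set (List ℕ)) := Set.range (fun t' : Term S => {p | subAt p t = some t'}) with hD
    have hDclosed : Closed D := by
      rintro c₁ ⟨u, rfl⟩ c₂ ⟨v, rfl⟩ p' p'' p h1 h2 h3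
      simp only [Set.mem_setOf_eq, subAt_append] at *
      rw [h2]; rw [h1] at h3; exact h3
    have hCD : PCSLe C D := by
      intro c hc
      obtain ⟨t', ht'⟩ := h c hc
      exact ⟨_, ⟨t', rfl⟩, fun p hp => ht' p hp⟩
    intro c hc
    obtain ⟨d, ⟨t', rfl⟩, hsub⟩ := hmin D hDclosed hCD c hc
    exact ⟨t', fun p hp => hsub hp⟩
  · intro h c hc
    obtain ⟨d, hd, hsub⟩ := hcontains c hc
    obtain ⟨t', ht'⟩ := h d hd
    exact ⟨t', fun p hp => ht' p (hsub hp)⟩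
end

section
/- The relation ⊑ on prefix-free path equivalence classes of a closed consistent PCS, defined by c₁ ⊑ c₂ iff some path in c₁ is a prefix of some path in c₂, is a partial order (reflexive, transitive, and antisymmetric). -/
universe u
variable {S : Type u}

/-- The prefix relation on the PECs of a closed consistent PCS
(pairwise disjoint, nonempty, prefix-free PECs):
`c₁ ⊑ c₂` iff some path of `c₁` is a prefix of some path of `c₂`.
It is reflexive, transitive, and antisymmetric (a partial order on the PECs). -/
theorem pec_prefix_partialOrder
    (C : Set (Set (List ℕ)))
    (hclosed : Closed C) (hdisj : C.Pairwise Disjoint)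
    (hne : ∀ c ∈ C, c.Nonempty) (hpf : ∀ c ∈ C, PrefixFree c) :
    (∀ c₁ ∈ C, ∃ p₁ ∈ c₁, ∃ p₂ ∈ c₁, p₁ <+: p₂) ∧
    (∀ c₁ ∈ C, ∀ c₂ ∈ C, ∀ c₃ ∈ C,
      (∃ p₁ ∈ c₁, ∃ p₂ ∈ c₂, p₁ <+: p₂) →
      (∃ p₂ ∈ c₂, ∃ p₃ ∈ c₃, p₂ <+: p₃) →
      (∃ p₁ ∈ c₁, ∃ p₃ ∈ c₃, p₁ <+: p₃)) ∧
    (∀ c₁ ∈ C, ∀ c₂ ∈ C,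
      (∃ p₁ ∈ c₁, ∃ p₂ ∈ c₂, p₁ <+: p₂) →
      (∃ p₂ ∈ c₂, ∃ p₁ ∈ c₁, p₂ <+: p₁) →
      c₁ = c₂) := by
  refine ⟨?_, ?_, ?_⟩
  · intro c₁ h₁
    obtain ⟨p, hp⟩ := hne c₁ h₁
    exact ⟨p, hp, p, hp, List.prefix_refl p⟩
  · rintro c₁ h₁ c₂ h₂ c₃ h₃ ⟨p₁, hp₁, p₂, hp₂, h12⟩ ⟨p₂', hp₂', p₃, hp₃, ⟨q, rfl⟩⟩
    have : p₂ ++ q ∈ c₃ := hclosed c₂ h₂ c₃ h₃ p₂' p₂ q hp₂' hp₂ hp₃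
    exact ⟨p₁, hp₁, p₂ ++ q, this, h12.trans (List.prefix_append _ _)⟩
  · rintro c₁ h₁ c₂ h₂ ⟨p₁, hp₁, p₂, hp₂, ⟨a, rfl⟩⟩ ⟨p₄, hp₄, p₃, hp₃, ⟨b, rfl⟩⟩
    by_contra hne12
    have hmem : (p₁ ++ a) ++ b ∈ c₁ :=
      hclosed c₂ h₂ c₁ h₁ p₄ (p₁ ++ a) b hp₄ hp₂ hp₃
    have heq : p₁ = (p₁ ++ a) ++ b := by
      apply hpf c₁ h₁ p₁ hp₁ _ hmem
      exact ⟨a ++ b, by simp⟩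
    have hab : a = [] ∧ b = [] := by
      have := congrArg List.length heq
      simp at this
      exact this
    have : p₁ ∈ c₂ := by simpa [hab.1] using hp₂
    exact (hdisj h₁ h₂ hne12).le_bot ⟨hp₁, this⟩
end
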